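/- Let Q be an algebraic curvature tensor on an n-dimensional inner product space (n≥3). Define s(Q)=tr_g(c(Q)), h(Q)=c(Q)-(1/n)s(Q)g, and weyl(Q)=Q+(1/(n-2))h(Q)⧢g+(1/(2n(n-1)))s(Q)·g⧢g. Then the three summands in Q = -(1/(2n(n-1)))s(Q)·g⧢g - (1/(n-2))h(Q)⧢g + weyl(Q) are pairwise orthogonal with respect to the natural inner product on (4,0)-tensors. -/

import Mathlib

open Finset

def gdelta (n : ℕ) : Fin n → Fin n → ℝ := fun i j => if i = j then 1 else 0

def kn {n : ℕ} (h k : Fin n → Fin n → ℝ) : Fin n → Fin n → Fin n → Fin n → ℝ :=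
  fun X Y Z W => h X Z * k Y W + h Y W * k X Z - h X W * k Y Z - h Y Z * k X W

def ric {n : ℕ} (Q : Fin n → Fin n → Fin n → Fin n → ℝ) : Fin n → Fin n → ℝ :=
  fun X Y => ∑ i, Q i X Y i

def tr2 {n : ℕ} (k : Fin n → Fin n → ℝ) : ℝ := ∑ i, k i i

def inner4 {n : ℕ} (P Q : Fin n → Fin n → Fin n → Fin n → ℝ) : ℝ :=
  ∑ i, ∑ j, ∑ k, ∑ l, P i j k l * Q i j k l

noncomputable def bianchiMap {n : ℕ} (Q : Fin n → Fin n → Fin n → Fin n → ℝ) :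
    Fin n → Fin n → Fin n → Fin n → ℝ :=
  fun X Y Z W => (1 / 3 : ℝ) * (Q X Y Z W + Q Y Z X W + Q Z X Y W)

/-! Pairing a Kulkarni–Nomizu product `a ⧢ g` with a tensor `T` that is antisymmetric in both
pairs contracts `g` into `T`, giving `⟪a ⧢ g, T⟫ = -4 ⟪a, c(T)⟫`. The Weyl part is Ricci-flat by
the choice of its coefficients, so it is orthogonal to every `a ⧢ g`, in particular to the other two
summands; and `⟪g ⧢ g, h ⧢ g⟫ = -4 tr c(h ⧢ g) = 8 (n - 1) tr h = 0` because `h` is trace-free. -/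

section

variable {n : ℕ}

lemma tr2_gdelta : tr2 (gdelta n) = n := by
  simp [tr2, gdelta]

lemma sum_sum_gdelta_mul (k : Fin n → Fin n → ℝ) :
    ∑ i, ∑ j, gdelta n i j * k i j = tr2 k := by
  simp [tr2, gdelta]

lemma kn_antisymm_left (a b : Fin n → Fin n → ℝ) (X Y Z W : Fin n) :
    kn a b X Y Z W = -kn a b Y X Z W := by
  simp only [kn]; ring

lemma kn_antisymm_right (a b : Fin n → Fin n → ℝ) (X Y Z W : Fin n) :
    kn a b X Y Z W = -kn a b X Y W Z := by
  simp only [kn]; ring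

lemma ric_kn_gdelta (a : Fin n → Fin n → ℝ) (X Y : Fin n) :
    ric (kn a (gdelta n)) X Y = (2 - n) * a X Y - tr2 a * gdelta n X Y := by
  by_cases hXY : X = Y <;>
    simp [ric, kn, gdelta, tr2, hXY, Finset.sum_sub_distrib, Finset.sum_add_distrib] <;> ring

lemma tr2_ric_kn_gdelta (a : Fin n → Fin n → ℝ) :
    tr2 (ric (kn a (gdelta n))) = 2 * (1 - n) * tr2 a := by
  rw [tr2]
  simp_rw [ric_kn_gdelta]
  rw [Finset.sum_sub_distrib, ← Finset.mul_sum, ← Finset.mul_sum, ← tr2, ← tr2, tr2_gdelta]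
  ring

lemma inner4_const_mul_left (c : ℝ) (P T : Fin n → Fin n → Fin n → Fin n → ℝ) :
    inner4 (fun X Y Z W => c * P X Y Z W) T = c * inner4 P T := by
  simp only [inner4, Finset.mul_sum, mul_assoc]

lemma inner4_const_mul_right (c : ℝ) (P T : Fin n → Fin n → Fin n → Fin n → ℝ) :
    inner4 P (fun X Y Z W => c * T X Y Z W) = c * inner4 P T := by
  simp only [inner4, Finset.mul_sum, mul_left_comm]

lemma inner4_kn_gdelta (a : Fin n → Fin n → ℝ) (T : Fin n → Fin n → Fin n → Fin n → ℝ)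
    (h12 : ∀ X Y Z W, T X Y Z W = -T Y X Z W) (h34 : ∀ X Y Z W, T X Y Z W = -T X Y W Z) :
    inner4 (kn a (gdelta n)) T = -4 * ∑ i, ∑ j, a i j * ric T i j := by
  have e1 : ∑ i, ∑ j, ∑ k, a i k * T i j k j = -∑ i, ∑ k, a i k * ric T i k := by
    simp only [← Finset.sum_neg_distrib, ← mul_neg, ric, ← h12]
    exact Finset.sum_congr rfl fun i _ => by rw [Finset.sum_comm]; simp only [Finset.mul_sum]
  have e2 : ∑ i, ∑ j, ∑ l, a j l * T i j i l = -∑ j, ∑ l, a j l * ric T j l := by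
    simp only [← Finset.sum_neg_distrib, ← mul_neg, ric, ← h34]
    rw [Finset.sum_comm]
    exact Finset.sum_congr rfl fun j _ => by rw [Finset.sum_comm]; simp only [Finset.mul_sum]
  have e3 : ∑ i, ∑ j, ∑ l, a i l * T i j j l = ∑ i, ∑ l, a i l * ric T i l := by
    simp only [ric, Finset.mul_sum]
    refine Finset.sum_congr rfl fun i _ => ?_
    rw [Finset.sum_comm]
    exact Finset.sum_congr rfl fun l _ => Finset.sum_congr rfl fun j _ => by rw [h12, h34, neg_neg]
  have e4 : ∑ i, ∑ j, ∑ k, a j k * T i j k i = ∑ j, ∑ k, a j k * ric T j k := by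
    simp only [ric, Finset.mul_sum]
    rw [Finset.sum_comm]
    exact Finset.sum_congr rfl fun j _ => Finset.sum_comm
  simp only [inner4, kn, gdelta, add_mul, sub_mul, mul_ite, ite_mul, mul_one, mul_zero, zero_mul,
    Finset.sum_add_distrib, Finset.sum_sub_distrib, Finset.sum_ite_irrel, Finset.sum_const_zero,
    Finset.sum_ite_eq, Finset.mem_univ, if_true]
  rw [e1, e2, e3, e4]
  ring

lemma inner4_kn_gdelta_eq_zero_of_ric_eq_zero (a : Fin n → Fin n → ℝ)
    {T : Fin n → Fin n → Fin n → Fin n → ℝ}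
    (h12 : ∀ X Y Z W, T X Y Z W = -T Y X Z W) (h34 : ∀ X Y Z W, T X Y Z W = -T X Y W Z)
    (hT : ric T = 0) :
    inner4 (kn a (gdelta n)) T = 0 := by
  simp [inner4_kn_gdelta a T h12 h34, hT]

lemma inner4_kn_gdelta_gdelta_kn_gdelta {a : Fin n → Fin n → ℝ} (ha : tr2 a = 0) :
    inner4 (kn (gdelta n) (gdelta n)) (kn a (gdelta n)) = 0 := by
  rw [inner4_kn_gdelta _ _ (kn_antisymm_left a _) (kn_antisymm_right a _), sum_sum_gdelta_mul,
    tr2_ric_kn_gdelta, ha, mul_zero, mul_zero]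

noncomputable def tracelessPart (k : Fin n → Fin n → ℝ) : Fin n → Fin n → ℝ :=
  fun X Y => k X Y - (1 / (n : ℝ)) * tr2 k * gdelta n X Y

noncomputable def weyl (Q : Fin n → Fin n → Fin n → Fin n → ℝ) :
    Fin n → Fin n → Fin n → Fin n → ℝ :=
  fun X Y Z W => Q X Y Z W + (1 / ((n : ℝ) - 2)) * kn (tracelessPart (ric Q)) (gdelta n) X Y Z W
    + (1 / (2 * (n : ℝ) * ((n : ℝ) - 1))) * tr2 (ric Q) * kn (gdelta n) (gdelta n) X Y Z W

lemma tr2_tracelessPart (k : Fin n → Fin n → ℝ) : tr2 (tracelessPart k) = 0 := by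
  obtain rfl | hn := eq_or_ne n 0
  · simp [tr2]
  have hn' : (n : ℝ) ≠ 0 := Nat.cast_ne_zero.mpr hn
  unfold tracelessPart
  rw [tr2, Finset.sum_sub_distrib, ← Finset.mul_sum, ← tr2, ← tr2, tr2_gdelta]
  field_simp
  ring

lemma ric_weyl (hn : 3 ≤ n) (Q : Fin n → Fin n → Fin n → Fin n → ℝ) : ric (weyl Q) = 0 := by
  have h3 : (3 : ℝ) ≤ n := by exact_mod_cast hn
  have hn0 : (n : ℝ) ≠ 0 := by positivity
  have hn1 : (n : ℝ) - 1 ≠ 0 := by linarith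
  have hn2 : (n : ℝ) - 2 ≠ 0 := by linarith
  ext X Y
  have hric : ric (weyl Q) X Y = ric Q X Y
      + 1 / ((n : ℝ) - 2) * ric (kn (tracelessPart (ric Q)) (gdelta n)) X Y
      + 1 / (2 * (n : ℝ) * ((n : ℝ) - 1)) * tr2 (ric Q) * ric (kn (gdelta n) (gdelta n)) X Y := by
    simp only [ric, weyl, Finset.sum_add_distrib, Finset.mul_sum]
  rw [hric, ric_kn_gdelta, ric_kn_gdelta, tr2_tracelessPart, tr2_gdelta, Pi.zero_apply,
    Pi.zero_apply]
  unfold tracelessPart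
  field_simp
  ring

lemma weyl_antisymm_left {Q : Fin n → Fin n → Fin n → Fin n → ℝ}
    (h12 : ∀ X Y Z W, Q X Y Z W = -Q Y X Z W) (X Y Z W : Fin n) :
    weyl Q X Y Z W = -weyl Q Y X Z W := by
  simp only [weyl, h12 X Y, kn_antisymm_left _ _ X Y]
  ring

lemma weyl_antisymm_right {Q : Fin n → Fin n → Fin n → Fin n → ℝ}
    (h34 : ∀ X Y Z W, Q X Y Z W = -Q X Y W Z) (X Y Z W : Fin n) :
    weyl Q X Y Z W = -weyl Q X Y W Z := by
  simp only [weyl, h34 X Y Z, kn_antisymm_right _ _ X Y Z]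
  ring

end

theorem stmt_6_general {n : ℕ} (hn : 3 ≤ n) (Q : Fin n → Fin n → Fin n → Fin n → ℝ)
    (h12 : ∀ X Y Z W, Q X Y Z W = -(Q Y X Z W))
    (h34 : ∀ X Y Z W, Q X Y Z W = -(Q X Y W Z)) :
    let s : ℝ := tr2 (ric Q)
    let h : Fin n → Fin n → ℝ := fun X Y => ric Q X Y - (1 / (n : ℝ)) * s * gdelta n X Y
    let A : Fin n → Fin n → Fin n → Fin n → ℝ :=
      fun X Y Z W => -(1 / (2 * (n : ℝ) * ((n : ℝ) - 1))) * s * kn (gdelta n) (gdelta n) X Y Z W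
    let B : Fin n → Fin n → Fin n → Fin n → ℝ :=
      fun X Y Z W => -(1 / ((n : ℝ) - 2)) * kn h (gdelta n) X Y Z W
    let C : Fin n → Fin n → Fin n → Fin n → ℝ :=
      fun X Y Z W => Q X Y Z W + (1 / ((n : ℝ) - 2)) * kn h (gdelta n) X Y Z W
        + (1 / (2 * (n : ℝ) * ((n : ℝ) - 1))) * s * kn (gdelta n) (gdelta n) X Y Z W
    inner4 A B = 0 ∧ inner4 A C = 0 ∧ inner4 B C = 0 := by
  intro s h A B C
  have hC (a : Fin n → Fin n → ℝ) : inner4 (kn a (gdelta n)) C = 0 :=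
    inner4_kn_gdelta_eq_zero_of_ric_eq_zero a (weyl_antisymm_left h12) (weyl_antisymm_right h34)
      (ric_weyl hn Q)
  have htr : tr2 h = 0 := tr2_tracelessPart (ric Q)
  refine ⟨?_, ?_, ?_⟩
  · rw [inner4_const_mul_left, inner4_const_mul_right, inner4_kn_gdelta_gdelta_kn_gdelta htr,
      mul_zero, mul_zero]
  · rw [inner4_const_mul_left, hC, mul_zero]
  · rw [inner4_const_mul_left, hC, mul_zero]

/-- Ricci decomposition of an algebraic curvature tensor: the scalar part, the
trace-free Ricci part and the Weyl part are pairwise orthogonal. -/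
theorem stmt_6 {n : ℕ} (hn : 3 ≤ n) (Q : Fin n → Fin n → Fin n → Fin n → ℝ)
    (h12 : ∀ X Y Z W, Q X Y Z W = -(Q Y X Z W))
    (h34 : ∀ X Y Z W, Q X Y Z W = -(Q X Y W Z))
    (hpair : ∀ X Y Z W, Q X Y Z W = Q Z W X Y)
    (hbianchi : bianchiMap Q = 0) :
    let s : ℝ := tr2 (ric Q)
    let h : Fin n → Fin n → ℝ := fun X Y => ric Q X Y - (1 / (n : ℝ)) * s * gdelta n X Y
    let A : Fin n → Fin n → Fin n → Fin n → ℝ :=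
      fun X Y Z W => -(1 / (2 * (n : ℝ) * ((n : ℝ) - 1))) * s * kn (gdelta n) (gdelta n) X Y Z W
    let B : Fin n → Fin n → Fin n → Fin n → ℝ :=
      fun X Y Z W => -(1 / ((n : ℝ) - 2)) * kn h (gdelta n) X Y Z W
    let C : Fin n → Fin n → Fin n → Fin n → ℝ :=
      fun X Y Z W => Q X Y Z W + (1 / ((n : ℝ) - 2)) * kn h (gdelta n) X Y Z W
        + (1 / (2 * (n : ℝ) * ((n : ℝ) - 1))) * s * kn (gdelta n) (gdelta n) X Y Z W
    inner4 A B = 0 ∧ inner4 A C = 0 ∧ inner4 B C = 0 :=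
  stmt_6_general hn Q h12 h34
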